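/- For every twice continuously differentiable function u on [0,1] × [0,Θ], the interpolation error ε = u − Πu satisfies ‖∂_θ ε‖²_{L²_{1/r}(Q)} ≤ h² ‖∂_{θθ} u‖²_{L²_{1/r}(Q)}, where ∂_θ ε is defined for θ outside the partition nodes and the inequality holds in [0,∞]. -/

import Mathlib

open MeasureTheory Set Real

/-- Squared weighted norm `‖v‖²_{L²_{1/r}(Q)} = ∫₀¹ ∫₀^Θ v(r,θ)² (1/r) dθ dr`. -/
noncomputable def wL2invr (Θ : ℝ) (v : ℝ × ℝ → ℝ) : ENNReal :=
  ∫⁻ r in Ioo (0:ℝ) 1, ∫⁻ θ in Ioo (0:ℝ) Θ, ENNReal.ofReal ((v (r, θ)) ^ 2 / r)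

/-- Partial derivative with respect to the second (angular) variable. -/
noncomputable def pd2 (u : ℝ × ℝ → ℝ) (p : ℝ × ℝ) : ℝ := deriv (fun t => u (p.1, t)) p.2

/-! On a cell `(θⱼ, θⱼ₊₁)` the angular derivative of `Πu(r, ·)` is the slope
`(u(r,θⱼ₊₁) − u(r,θⱼ)) / (θⱼ₊₁ − θⱼ)`, which by the mean value theorem is `∂_θ u(r, ξ)` for some
`ξ` in the cell. So `∂_θ ε(r, θ) = ∫_ξ^θ ∂_θθ u(r, ·)`, and Cauchy–Schwarz bounds its square by
`(θⱼ₊₁ − θⱼ) ∫_cell (∂_θθ u)²`; integrating over the cell gives the factor `(θⱼ₊₁ − θⱼ)² ≤ h²`.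
Summing over the cells (the nodes form a null set) and integrating against `dr / r` finishes. -/

open scoped ENNReal Interval

theorem lintegral_sq_le_measure_univ_mul_lintegral_sq {α : Type*} [MeasurableSpace α]
    {μ : Measure α} {g : α → ℝ≥0∞} (hg : AEMeasurable g μ) :
    (∫⁻ x, g x ∂μ) ^ 2 ≤ μ univ * ∫⁻ x, g x ^ 2 ∂μ := by
  have holder := ENNReal.lintegral_mul_le_Lp_mul_Lq μ Real.HolderConjugate.two_two
    aemeasurable_const hg (f := fun _ => 1)
  simp only [Pi.mul_apply, one_mul, ENNReal.one_rpow, lintegral_one] at holder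
  calc (∫⁻ x, g x ∂μ) ^ 2
      ≤ (μ univ ^ (1 / 2 : ℝ) * (∫⁻ x, g x ^ (2 : ℝ) ∂μ) ^ (1 / 2 : ℝ)) ^ 2 := by gcongr
    _ = μ univ * ∫⁻ x, g x ^ 2 ∂μ := by
      rw [mul_pow, ← ENNReal.rpow_natCast, ← ENNReal.rpow_natCast, ← ENNReal.rpow_mul,
        ← ENNReal.rpow_mul]
      norm_num

theorem ofReal_sq_eq_enorm_sq (a : ℝ) : ENNReal.ofReal (a ^ 2) = ‖a‖ₑ ^ 2 := by
  rw [enorm_eq_ofReal_abs, ← ENNReal.ofReal_pow (abs_nonneg a), sq_abs]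

theorem ofReal_sq_sub_le_mul_lintegral_sq_deriv {f f' : ℝ → ℝ} {x y : ℝ}
    (hf : ∀ z ∈ uIcc x y, HasDerivAt f (f' z) z) (hf' : ContinuousOn f' (uIcc x y)) :
    ENNReal.ofReal ((f y - f x) ^ 2)
      ≤ ENNReal.ofReal |y - x| * ∫⁻ z in Ι x y, ENNReal.ofReal (f' z ^ 2) := by
  have ftc : ∫ z in x..y, f' z = f y - f x :=
    intervalIntegral.integral_eq_sub_of_hasDerivAt hf hf'.intervalIntegrable
  have hmeas : AEMeasurable (fun z => ‖f' z‖ₑ) (volume.restrict (Ι x y)) :=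
    (hf'.mono uIoc_subset_uIcc).aemeasurable measurableSet_uIoc |>.enorm
  calc ENNReal.ofReal ((f y - f x) ^ 2)
      = ‖∫ z in Ι x y, f' z‖ₑ ^ 2 := by
        rw [ofReal_sq_eq_enorm_sq, ← ftc, ← ofReal_norm, ← ofReal_norm,
          intervalIntegral.norm_integral_eq_norm_integral_uIoc]
    _ ≤ (∫⁻ z in Ι x y, ‖f' z‖ₑ) ^ 2 := by gcongr; exact enorm_integral_le_lintegral_enorm _
    _ ≤ volume (Ι x y) * ∫⁻ z in Ι x y, ‖f' z‖ₑ ^ 2 := by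
        simpa only [Measure.restrict_apply_univ] using
          lintegral_sq_le_measure_univ_mul_lintegral_sq hmeas
    _ = ENNReal.ofReal |y - x| * ∫⁻ z in Ι x y, ENNReal.ofReal (f' z ^ 2) := by
        simp only [Real.volume_uIoc, ofReal_sq_eq_enorm_sq]

theorem ofReal_sq_deriv_sub_slope_le {g : ℝ → ℝ} {a b θ : ℝ} (hab : a < b)
    (hg : ContDiffOn ℝ 2 g (Icc a b)) (hθ : θ ∈ Ioo a b) :
    ENNReal.ofReal ((deriv g θ - (g b - g a) / (b - a)) ^ 2)
      ≤ ENNReal.ofReal (b - a) * ∫⁻ x in Ioo a b, ENNReal.ofReal (deriv (deriv g) x ^ 2) := by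
  have hg' : ContDiffOn ℝ 2 g (Ioo a b) := hg.mono Ioo_subset_Icc_self
  have hdg : ContDiffOn ℝ 1 (deriv g) (Ioo a b) := hg'.deriv_of_isOpen isOpen_Ioo (by norm_num)
  have hasDeriv : ∀ x ∈ Ioo a b, HasDerivAt g (deriv g x) x := fun x hx =>
    (hg'.differentiableOn two_ne_zero x hx).differentiableAt (isOpen_Ioo.mem_nhds hx)
      |>.hasDerivAt
  have hasDeriv₂ : ∀ x ∈ Ioo a b, HasDerivAt (deriv g) (deriv (deriv g) x) x := fun x hx =>
    (hdg.differentiableOn one_ne_zero x hx).differentiableAt (isOpen_Ioo.mem_nhds hx)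
      |>.hasDerivAt
  obtain ⟨ξ, hξ, hslope⟩ := exists_hasDerivAt_eq_slope g (deriv g) hab hg.continuousOn hasDeriv
  have hsub : uIcc ξ θ ⊆ Ioo a b := ordConnected_Ioo.uIcc_subset hξ hθ
  rw [← hslope]
  calc ENNReal.ofReal ((deriv g θ - deriv g ξ) ^ 2)
      ≤ ENNReal.ofReal |θ - ξ| * ∫⁻ x in Ι ξ θ, ENNReal.ofReal (deriv (deriv g) x ^ 2) :=
        ofReal_sq_sub_le_mul_lintegral_sq_deriv (fun x hx => hasDeriv₂ x (hsub hx))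
          ((hdg.continuousOn_deriv_of_isOpen isOpen_Ioo le_rfl).mono hsub)
    _ ≤ ENNReal.ofReal (b - a) * ∫⁻ x in Ioo a b, ENNReal.ofReal (deriv (deriv g) x ^ 2) := by
        gcongr
        · rw [abs_le]; constructor <;> linarith [hξ.1, hξ.2, hθ.1, hθ.2]
        · exact uIoc_subset_uIcc.trans hsub

theorem lintegral_sq_deriv_sub_slope_le {g : ℝ → ℝ} {a b : ℝ} (hab : a < b)
    (hg : ContDiffOn ℝ 2 g (Icc a b)) :
    ∫⁻ θ in Ioo a b, ENNReal.ofReal ((deriv g θ - (g b - g a) / (b - a)) ^ 2)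
      ≤ ENNReal.ofReal ((b - a) ^ 2)
        * ∫⁻ θ in Ioo a b, ENNReal.ofReal (deriv (deriv g) θ ^ 2) := by
  calc ∫⁻ θ in Ioo a b, ENNReal.ofReal ((deriv g θ - (g b - g a) / (b - a)) ^ 2)
      ≤ ∫⁻ _ in Ioo a b,
          ENNReal.ofReal (b - a) * ∫⁻ x in Ioo a b, ENNReal.ofReal (deriv (deriv g) x ^ 2) :=
        setLIntegral_mono' measurableSet_Ioo fun θ hθ => ofReal_sq_deriv_sub_slope_le hab hg hθ
    _ = ENNReal.ofReal ((b - a) ^ 2)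
          * ∫⁻ θ in Ioo a b, ENNReal.ofReal (deriv (deriv g) θ ^ 2) := by
        rw [setLIntegral_const, Real.volume_Ioo, mul_right_comm,
          ← ENNReal.ofReal_mul (sub_nonneg.mpr hab.le), ← sq]

theorem lintegral_Ioo_eq_sum_lintegral_Ioo {μ : Measure ℝ} [NullSingletonClass μ]
    {t : ℕ → ℝ} {n : ℕ} (ht : MonotoneOn t (Iic n)) (f : ℝ → ℝ≥0∞) :
    ∫⁻ x in Ioo (t 0) (t n), f x ∂μ
      = ∑ j ∈ Finset.range n, ∫⁻ x in Ioo (t j) (t (j + 1)), f x ∂μ := by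
  have hle : ∀ {i j : ℕ}, i ≤ j → j ≤ n → t i ≤ t j := fun hij hjn =>
    ht (mem_Iic.mpr (hij.trans hjn)) (mem_Iic.mpr hjn) hij
  have hunion : ⋃ j ∈ Finset.range n, Ioc (t j) (t (j + 1)) = Ioc (t 0) (t n) := by
    refine (iUnion₂_subset fun j hj => ?_).antisymm (Ioc_subset_biUnion_Ioc n t)
    have hj : j < n := Finset.mem_range.mp hj
    exact Ioc_subset_Ioc (hle j.zero_le hj.le) (hle hj le_rfl)
  have hdisj : (Finset.range n : Set ℕ).PairwiseDisjoint fun j => Ioc (t j) (t (j + 1)) := by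
    intro i hi j hj hij
    simp only [Finset.coe_range, mem_Iio] at hi hj
    rcases hij.lt_or_gt with hlt | hlt
    · exact Ioc_disjoint_Ioc_of_le (hle hlt hj.le)
    · exact (Ioc_disjoint_Ioc_of_le (hle hlt hi.le)).symm
  simp only [setLIntegral_congr (Ioo_ae_eq_Ioc (μ := μ))]
  rw [← hunion, lintegral_biUnion_finset hdisj (fun _ _ => measurableSet_Ioc)]

theorem deriv_eq_slope_of_affine_on_Icc {f : ℝ → ℝ} {a b x : ℝ}
    (hf : ∀ y ∈ Icc a b, f y = f a + (f b - f a) * (y - a) / (b - a)) (hx : x ∈ Ioo a b) :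
    deriv f x = (f b - f a) / (b - a) := by
  have hloc : f =ᶠ[nhds x] fun y => f a + (f b - f a) * (y - a) / (b - a) :=
    Filter.eventually_of_mem (isOpen_Ioo.mem_nhds hx) fun y hy => hf y (Ioo_subset_Icc_self hy)
  rw [hloc.deriv_eq]
  simp

theorem sum_mul_deriv_hat_eq_slope {N : ℕ} {t : ℕ → ℝ} {e : ℕ → ℝ → ℝ}
    (hnode : ∀ i < N, ∀ j < N, e i (t j) = if i = j then 1 else 0)
    (hlin : ∀ i < N, ∀ j, j + 1 < N → ∀ x ∈ Icc (t j) (t (j + 1)),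
      e i x = e i (t j) + (e i (t (j + 1)) - e i (t j)) * (x - t j) / (t (j + 1) - t j))
    {j : ℕ} (hj : j + 1 < N) {θ : ℝ} (hθ : θ ∈ Ioo (t j) (t (j + 1))) (c : ℕ → ℝ) :
    ∑ i ∈ Finset.range N, c i * deriv (e i) θ = (c (j + 1) - c j) / (t (j + 1) - t j) := by
  have hderiv : ∀ i ∈ Finset.range N, deriv (e i) θ
      = ((if i = j + 1 then 1 else 0) - if i = j then 1 else 0) / (t (j + 1) - t j) := by
    intro i hi
    have hi : i < N := Finset.mem_range.mp hi
    rw [deriv_eq_slope_of_affine_on_Icc (hlin i hi j hj) hθ, hnode i hi _ hj,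
      hnode i hi j (by omega)]
  rw [Finset.sum_congr rfl fun i hi => congrArg (c i * ·) (hderiv i hi)]
  simp [mul_sub, Finset.sum_sub_distrib, ← mul_div_assoc, ← Finset.sum_div, hj,
    show j < N by omega, sub_div]

theorem lintegral_sq_deriv_sub_piecewise_slope_le {n : ℕ} {t : ℕ → ℝ}
    (ht : ∀ j < n, t j < t (j + 1)) {g d : ℝ → ℝ} (hg : ContDiffOn ℝ 2 g (Icc (t 0) (t n)))
    (hd : ∀ j < n, ∀ θ ∈ Ioo (t j) (t (j + 1)),
      d θ = deriv g θ - (g (t (j + 1)) - g (t j)) / (t (j + 1) - t j))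
    {H : ℝ} (hH : ∀ j < n, t (j + 1) - t j ≤ H) :
    ∫⁻ θ in Ioo (t 0) (t n), ENNReal.ofReal (d θ ^ 2)
      ≤ ENNReal.ofReal (H ^ 2)
        * ∫⁻ θ in Ioo (t 0) (t n), ENNReal.ofReal (deriv (deriv g) θ ^ 2) := by
  have hmono : MonotoneOn t (Iic n) := (strictMonoOn_Iic_of_lt_succ ht).monotoneOn
  rw [lintegral_Ioo_eq_sum_lintegral_Ioo hmono, lintegral_Ioo_eq_sum_lintegral_Ioo hmono,
    Finset.mul_sum]
  gcongr with j hj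
  have hj : j < n := Finset.mem_range.mp hj
  have hgj : ContDiffOn ℝ 2 g (Icc (t j) (t (j + 1))) :=
    hg.mono (Icc_subset_Icc (hmono (mem_Iic.mpr n.zero_le) (mem_Iic.mpr hj.le) j.zero_le)
      (hmono (mem_Iic.mpr hj) (mem_Iic.mpr le_rfl) hj))
  calc ∫⁻ θ in Ioo (t j) (t (j + 1)), ENNReal.ofReal (d θ ^ 2)
      = ∫⁻ θ in Ioo (t j) (t (j + 1)), ENNReal.ofReal
          ((deriv g θ - (g (t (j + 1)) - g (t j)) / (t (j + 1) - t j)) ^ 2) :=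
        setLIntegral_congr_fun measurableSet_Ioo fun θ hθ => by rw [hd j hj θ hθ]
    _ ≤ ENNReal.ofReal ((t (j + 1) - t j) ^ 2)
          * ∫⁻ θ in Ioo (t j) (t (j + 1)), ENNReal.ofReal (deriv (deriv g) θ ^ 2) :=
        lintegral_sq_deriv_sub_slope_le (ht j hj) hgj
    _ ≤ ENNReal.ofReal (H ^ 2)
          * ∫⁻ θ in Ioo (t j) (t (j + 1)), ENNReal.ofReal (deriv (deriv g) θ ^ 2) := by
        gcongr
        · exact sub_nonneg.mpr (ht j hj).le
        · exact hH j hj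

theorem wL2invr_le_mul_of_forall {Θ : ℝ} {v w : ℝ × ℝ → ℝ} {C : ℝ≥0∞} (hC : C ≠ ∞)
    (h : ∀ r ∈ Ioo (0 : ℝ) 1, ∫⁻ θ in Ioo 0 Θ, ENNReal.ofReal (v (r, θ) ^ 2)
      ≤ C * ∫⁻ θ in Ioo 0 Θ, ENNReal.ofReal (w (r, θ) ^ 2)) :
    wL2invr Θ v ≤ C * wL2invr Θ w := by
  have hweight : ∀ (f : ℝ × ℝ → ℝ) (r : ℝ),
      ∫⁻ θ in Ioo 0 Θ, ENNReal.ofReal (f (r, θ) ^ 2 / r)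
        = (∫⁻ θ in Ioo 0 Θ, ENNReal.ofReal (f (r, θ) ^ 2)) * ENNReal.ofReal r⁻¹ := by
    intro f r
    simp only [← lintegral_mul_const' _ _ ENNReal.ofReal_ne_top, div_eq_mul_inv,
      ENNReal.ofReal_mul (sq_nonneg _)]
  rw [wL2invr, wL2invr, ← lintegral_const_mul' _ _ hC]
  refine setLIntegral_mono' measurableSet_Ioo fun r hr => ?_
  rw [hweight, hweight, ← mul_assoc]
  gcongr
  exact h r hr

theorem stmt8_general (Θ : ℝ)
    (N : ℕ) (t : ℕ → ℝ) (e : ℕ → ℝ → ℝ)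
    (ht0 : t 0 = 0) (htN : t (N - 1) = Θ)
    (htmono : ∀ j, j + 1 < N → t j < t (j + 1))
    (hnode : ∀ i < N, ∀ j < N, e i (t j) = if i = j then 1 else 0)
    (hlin : ∀ i < N, ∀ j, j + 1 < N → ∀ x ∈ Icc (t j) (t (j + 1)),
      e i x = e i (t j) + (e i (t (j + 1)) - e i (t j)) * (x - t j) / (t (j + 1) - t j))
    (h : ℝ) (hmax : IsGreatest ((fun j => t (j + 1) - t j) '' {j : ℕ | j + 1 < N}) h)
    (u : ℝ × ℝ → ℝ) (hu : ContDiffOn ℝ 2 u (Icc (0:ℝ) 1 ×ˢ Icc (0:ℝ) Θ))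
    (dε : ℝ × ℝ → ℝ)
    (hdε : ∀ p, dε p = pd2 u p - ∑ i ∈ Finset.range N, u (p.1, t i) * deriv (e i) p.2) :
    wL2invr Θ dε ≤ ENNReal.ofReal (h ^ 2) * wL2invr Θ (pd2 (pd2 u)) := by
  refine wL2invr_le_mul_of_forall ENNReal.ofReal_ne_top fun r hr => ?_
  have hg : ContDiffOn ℝ 2 (fun θ => u (r, θ)) (Icc (t 0) (t (N - 1))) := by
    rw [ht0, htN]
    exact hu.comp (by fun_prop) fun θ hθ => ⟨⟨hr.1.le, hr.2.le⟩, hθ⟩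
  have hslope : ∀ j < N - 1, ∀ θ ∈ Ioo (t j) (t (j + 1)), dε (r, θ)
      = pd2 u (r, θ) - (u (r, t (j + 1)) - u (r, t j)) / (t (j + 1) - t j) := fun j hj θ hθ => by
    rw [hdε, sum_mul_deriv_hat_eq_slope hnode hlin (by omega) hθ]
  have key := lintegral_sq_deriv_sub_piecewise_slope_le (fun j hj => htmono j (by omega)) hg hslope
    fun j hj => hmax.2 ⟨j, show j + 1 < N by omega, rfl⟩
  rwa [ht0, htN] at key

/-- Angular error estimate for the interpolant: for `u` twice
continuously differentiable on `[0,1] × [0,Θ]` and `ε = u − Πu`,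
`‖∂_θ ε‖²_{L²_{1/r}(Q)} ≤ h² ‖∂_{θθ} u‖²_{L²_{1/r}(Q)}` in `[0,∞]`,
where `h = max_j (θ_{j+1} − θ_j)` and `∂_θ ε (r,θ) = ∂_θ u(r,θ) − Σ_i u(r,θ_i) e_i′(θ)`
is defined for `θ` outside the partition nodes. -/
theorem stmt8 (Θ : ℝ) (hΘ₀ : 0 < Θ) (hΘ₂ : Θ < 2 * π)
    (N : ℕ) (hN : 2 ≤ N) (t : ℕ → ℝ) (e : ℕ → ℝ → ℝ)
    (ht0 : t 0 = 0) (htN : t (N - 1) = Θ)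
    (htmono : ∀ j, j + 1 < N → t j < t (j + 1))
    (hnode : ∀ i < N, ∀ j < N, e i (t j) = if i = j then 1 else 0)
    (hlin : ∀ i < N, ∀ j, j + 1 < N → ∀ x ∈ Icc (t j) (t (j + 1)),
      e i x = e i (t j) + (e i (t (j + 1)) - e i (t j)) * (x - t j) / (t (j + 1) - t j))
    (h : ℝ) (hmax : IsGreatest ((fun j => t (j + 1) - t j) '' {j : ℕ | j + 1 < N}) h)
    (u : ℝ × ℝ → ℝ) (hu : ContDiffOn ℝ 2 u (Icc (0:ℝ) 1 ×ˢ Icc (0:ℝ) Θ))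
    (dε : ℝ × ℝ → ℝ)
    (hdε : ∀ p, dε p = pd2 u p - ∑ i ∈ Finset.range N, u (p.1, t i) * deriv (e i) p.2) :
    wL2invr Θ dε ≤ ENNReal.ofReal (h ^ 2) * wL2invr Θ (pd2 (pd2 u)) :=
  stmt8_general Θ N t e ht0 htN htmono hnode hlin h hmax u hu dε hdε
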